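/- (Construction of a simple evolution leading to a given pure state.) Let φ be a unit vector in ℂⁿ and let ρ = φφ† be the corresponding pure-state density matrix. Then there exists an indecomposable n×n complex matrix h such that for every density matrix σ, D_h(σ) = 0 if and only if σ = ρ; i.e. there is a simple Lindblad evolution having the pure state ρ as its unique stationary state. -/

import Mathlib

/-!
After a unitary change of basis taking `φ` to the first basis vector `e₀`, take for `h` the
truncated shift `S`, with `S e₀ = 0` and `S eⱼ₊₁ = eⱼ`. Since `S†S = 1 - e₀e₀†`, the pure state
`e₀e₀†` is stationary. For the number operator `N = diag(0, 1, …, n - 1)` one has `NS = S(N - 1)`,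
whence the dual generator satisfies `D_S†(N) = e₀e₀† - 1`; pairing a stationary density matrix `τ`
with `N` gives `τ₀₀ = tr τ = 1`, and positivity then forces `τ = e₀e₀†`. A projection commuting
with `S` also commutes with `S†` and with `e₀e₀† = 1 - S†S`; so it maps `e₀` to a multiple `c e₀`,
and applying `S†` repeatedly shows that it is `c • 1`.
-/

open Matrix
open scoped ComplexOrder

/-- The simple Lindblad generator `D_h`. -/
noncomputable def lindblad {n : ℕ} (h ρ : Matrix (Fin n) (Fin n) ℂ) :
    Matrix (Fin n) (Fin n) ℂ :=
  h * ρ * hᴴ - (1 / 2 : ℂ) • (hᴴ * h * ρ + ρ * (hᴴ * h))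

/-- A matrix is indecomposable if the only orthogonal projections commuting with it
are `0` and `1`. -/
def Indecomposable {n : ℕ} (h : Matrix (Fin n) (Fin n) ℂ) : Prop :=
  ∀ P : Matrix (Fin n) (Fin n) ℂ, P = Pᴴ → P * P = P → P * h = h * P → P = 0 ∨ P = 1

namespace Matrix

section Shift

variable (R : Type*) (m : ℕ)

def shift [Zero R] [One R] : Matrix (Fin (m + 1)) (Fin (m + 1)) R :=
  of fun i j => if (i : ℕ) + 1 = j then 1 else 0

def numberOp [NatCast R] [Zero R] : Matrix (Fin (m + 1)) (Fin (m + 1)) R :=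
  diagonal fun i => (i : R)

variable {R m}

lemma shift_mulVec_single_zero [Semiring R] : shift R m *ᵥ Pi.single 0 1 = 0 := by
  ext i
  simp [shift]

lemma shift_mulVec_single_succ [Semiring R] (i : Fin m) :
    shift R m *ᵥ Pi.single i.succ 1 = Pi.single i.castSucc 1 := by
  ext j
  simp [shift, Pi.single_apply, Fin.ext_iff]

lemma conjTranspose_shift_mulVec_single_castSucc [Semiring R] [StarRing R] (i : Fin m) :
    (shift R m)ᴴ *ᵥ Pi.single i.castSucc 1 = Pi.single i.succ 1 := by
  ext j
  simp [shift, Pi.single_apply, Fin.ext_iff, eq_comm, apply_ite star]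

lemma shift_mul_single_zero [Semiring R] : shift R m * single 0 0 1 = 0 := by
  ext i j
  by_cases hj : j = 0
  · simp [shift, hj]
  · exact mul_single_apply_of_ne _ _ _ _ _ hj _

lemma conjTranspose_shift_mul_shift [Ring R] [StarRing R] :
    (shift R m)ᴴ * shift R m = 1 - single 0 0 1 := by
  refine ext_of_mulVec_single fun i => ?_
  rw [← mulVec_mulVec, sub_mulVec, one_mulVec, single_mulVec]
  cases i using Fin.cases with
  | zero =>
    rw [shift_mulVec_single_zero, mulVec_zero]
    simp [Pi.single]
  | succ i =>
    rw [shift_mulVec_single_succ, conjTranspose_shift_mulVec_single_castSucc]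
    simp [Fin.succ_ne_zero]

lemma numberOp_mul_shift [Ring R] :
    numberOp R m * shift R m = shift R m * (numberOp R m - 1) := by
  ext i j
  simp only [numberOp, shift, diagonal_mul, mul_sub, mul_one, sub_apply, mul_diagonal, of_apply]
  split_ifs with h
  · simp [← h]
  · simp

lemma single_zero_mul_numberOp [Semiring R] : single 0 0 1 * numberOp R m = 0 := by
  ext i j
  by_cases hj : j = 0
  · simp [numberOp, hj]
  · simp [numberOp, Ne.symm hj]

lemma numberOp_mul_single_zero [Semiring R] : numberOp R m * single 0 0 1 = 0 := by
  ext i j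
  by_cases hi : i = 0
  · simp [numberOp, hi]
  · simp [numberOp, Ne.symm hi]

lemma eq_smul_one_of_commute_conjTranspose_shift [CommSemiring R] [StarRing R]
    {Q : Matrix (Fin (m + 1)) (Fin (m + 1)) R} (hQS : Q * (shift R m)ᴴ = (shift R m)ᴴ * Q)
    (hQE : Q * single 0 0 1 = single 0 0 1 * Q) : Q = Q 0 0 • 1 := by
  have hcol : ∀ i, Q *ᵥ Pi.single i 1 = Q 0 0 • Pi.single i 1 := by
    intro i
    induction i using Fin.induction with
    | zero =>
      ext k
      by_cases hk : k = 0
      · simp [hk]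
      · have h := congrFun (congrFun hQE k) 0
        rw [mul_single_apply_same, mul_one, single_mul_apply_of_ne _ _ _ _ _ hk] at h
        simp [h, hk]
    | succ i ih =>
      calc Q *ᵥ Pi.single i.succ 1 = Q *ᵥ ((shift R m)ᴴ *ᵥ Pi.single i.castSucc 1) := by
            rw [conjTranspose_shift_mulVec_single_castSucc]
        _ = (shift R m)ᴴ *ᵥ (Q *ᵥ Pi.single i.castSucc 1) := by
            rw [mulVec_mulVec, hQS, ← mulVec_mulVec]
        _ = Q 0 0 • Pi.single i.succ 1 := by
            rw [ih, mulVec_smul, conjTranspose_shift_mulVec_single_castSucc]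
  exact ext_of_mulVec_single fun i => by rw [hcol, smul_mulVec, one_mulVec]

end Shift

namespace PosSemidef

variable {𝕜 ι : Type*} [RCLike 𝕜] [Fintype ι] [DecidableEq ι] {A : Matrix ι ι 𝕜}

lemma apply_eq_zero_of_diag_eq_zero (hA : A.PosSemidef) {j : ι} (hj : A j j = 0) (i : ι) :
    A i j = 0 := by
  have hcol : A *ᵥ Pi.single j 1 = 0 :=
    (hA.dotProduct_mulVec_zero_iff _).1 (by simpa [mulVec_single_one] using hj)
  simpa using congrFun hcol i

lemma eq_single_of_apply_eq_trace (hA : A.PosSemidef) {i : ι} (hi : A i i = A.trace) :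
    A = single i i A.trace := by
  have hdiag : ∀ j ≠ i, A j j = 0 := by
    have hsum : ∑ j ∈ Finset.univ.erase i, A j j = 0 := by
      rw [← add_right_inj (A i i), Finset.add_sum_erase _ (fun j => A j j) (Finset.mem_univ i),
        add_zero, hi]
      rfl
    intro j hj
    exact (Finset.sum_eq_zero_iff_of_nonneg (fun k _ => hA.diag_nonneg)).1 hsum j
      (Finset.mem_erase.2 ⟨hj, Finset.mem_univ j⟩)
  ext k l
  by_cases hl : l = i
  · subst hl
    by_cases hk : k = l
    · simp [hk, hi]
    · rw [← hA.1.apply, hA.apply_eq_zero_of_diag_eq_zero (hdiag k hk), star_zero,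
        single_apply_of_row_ne (Ne.symm hk)]
  · rw [hA.apply_eq_zero_of_diag_eq_zero (hdiag l hl), single_apply_of_col_ne _ _ (Ne.symm hl)]

end PosSemidef

section Unitary

open Unitary

variable {𝕜 ι : Type*} [RCLike 𝕜] [Fintype ι] [DecidableEq ι]

lemma PosSemidef.of_conjStarAlgAut {U : unitary (Matrix ι ι 𝕜)} {x : Matrix ι ι 𝕜}
    (hx : (conjStarAlgAut 𝕜 _ U x).PosSemidef) : x.PosSemidef := by
  convert hx.conjTranspose_mul_mul_same (U : Matrix ι ι 𝕜) using 1
  simp only [conjStarAlgAut_apply, ← star_eq_conjTranspose, ← Matrix.mul_assoc, coe_star_mul_self,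
    Matrix.one_mul]
  rw [Matrix.mul_assoc, coe_star_mul_self, Matrix.mul_one]

lemma trace_conjStarAlgAut (U : unitary (Matrix ι ι 𝕜)) (x : Matrix ι ι 𝕜) :
    (conjStarAlgAut 𝕜 _ U x).trace = x.trace := by
  rw [conjStarAlgAut_apply, trace_mul_cycle, coe_star_mul_self, Matrix.one_mul]

lemma mul_single_mul_conjTranspose (A : Matrix ι ι 𝕜) (i : ι) :
    A * single i i 1 * Aᴴ = vecMulVec (A.col i) (star (A.col i)) := by
  rw [single_eq_single_vecMulVec_single, mul_vecMulVec, vecMulVec_mul, mulVec_single_one]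
  congr 1
  ext j
  simp [vecMul, dotProduct, Pi.single_apply]

lemma exists_unitary_col_eq (i : ι) (φ : ι → 𝕜) (hφ : star φ ⬝ᵥ φ = 1) :
    ∃ U : unitary (Matrix ι ι 𝕜), (U : Matrix ι ι 𝕜).col i = φ := by
  have hon : Orthonormal 𝕜 (({i} : Set ι).domRestrict fun _ => WithLp.toLp 2 φ) := by
    rw [orthonormal_iff_ite]
    rintro ⟨j, rfl⟩ ⟨k, rfl⟩
    rw [if_pos rfl]
    exact (EuclideanSpace.inner_toLp_toLp φ φ).trans (by rwa [dotProduct_comm])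
  obtain ⟨b, hb⟩ := hon.exists_orthonormalBasis_extension_of_card_eq finrank_euclideanSpace
  refine ⟨⟨_, (EuclideanSpace.basisFun ι 𝕜).toMatrix_orthonormalBasis_mem_unitary b⟩, ?_⟩
  ext j
  simp [Module.Basis.toMatrix_apply, hb i rfl]

end Unitary

end Matrix

noncomputable def lindbladAdjoint {n : ℕ} (h X : Matrix (Fin n) (Fin n) ℂ) :
    Matrix (Fin n) (Fin n) ℂ :=
  hᴴ * X * h - (1 / 2 : ℂ) • (hᴴ * h * X + X * (hᴴ * h))

lemma trace_lindblad_mul {n : ℕ} (h ρ X : Matrix (Fin n) (Fin n) ℂ) :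
    (lindblad h ρ * X).trace = (ρ * lindbladAdjoint h X).trace := by
  have e1 : (h * (ρ * (hᴴ * X))).trace = (ρ * (hᴴ * (X * h))).trace := by
    rw [trace_mul_comm]
    simp only [Matrix.mul_assoc]
  have e2 : (hᴴ * (h * (ρ * X))).trace = (ρ * (X * (hᴴ * h))).trace := by
    rw [← Matrix.mul_assoc, trace_mul_comm, Matrix.mul_assoc]
  simp only [lindblad, lindbladAdjoint, sub_mul, add_mul, smul_mul, Matrix.mul_sub, Matrix.mul_add,
    Matrix.mul_smul, trace_sub, trace_add, trace_smul, Matrix.mul_assoc]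
  rw [e1, e2, add_comm]

section Transport

variable {n : ℕ} (e : Matrix (Fin n) (Fin n) ℂ ≃⋆ₐ[ℂ] Matrix (Fin n) (Fin n) ℂ)

lemma lindblad_map (h ρ : Matrix (Fin n) (Fin n) ℂ) :
    lindblad (e h) (e ρ) = e (lindblad h ρ) := by
  simp only [lindblad, ← star_eq_conjTranspose, map_sub, map_smul, map_add, map_mul, map_star]

lemma Indecomposable.map {h : Matrix (Fin n) (Fin n) ℂ} (hh : Indecomposable h) :
    Indecomposable (e h) := by
  intro P hP hPP hPh
  obtain ⟨Q, rfl⟩ : ∃ Q, e Q = P := ⟨e.symm P, e.apply_symm_apply P⟩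
  rw [← star_eq_conjTranspose, ← map_star, EmbeddingLike.apply_eq_iff_eq,
    star_eq_conjTranspose] at hP
  rw [← map_mul, EmbeddingLike.apply_eq_iff_eq] at hPP
  rw [← map_mul, ← map_mul, EmbeddingLike.apply_eq_iff_eq] at hPh
  rcases hh Q hP hPP hPh with rfl | rfl
  · exact Or.inl (map_zero e)
  · exact Or.inr (map_one e)

end Transport

section ShiftGenerator

variable {m : ℕ}

lemma lindblad_shift_single_zero : lindblad (shift ℂ m) (single 0 0 1) = 0 := by
  rw [lindblad, shift_mul_single_zero, Matrix.zero_mul, conjTranspose_shift_mul_shift]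
  simp [sub_mul, mul_sub]

lemma lindbladAdjoint_shift_numberOp :
    lindbladAdjoint (shift ℂ m) (numberOp ℂ m) = single 0 0 1 - 1 := by
  rw [lindbladAdjoint, Matrix.mul_assoc, numberOp_mul_shift, ← Matrix.mul_assoc,
    conjTranspose_shift_mul_shift]
  simp only [sub_mul, mul_sub, one_mul, mul_one, single_zero_mul_numberOp,
    numberOp_mul_single_zero]
  module

lemma apply_zero_zero_eq_trace_of_lindblad_shift_eq_zero
    {τ : Matrix (Fin (m + 1)) (Fin (m + 1)) ℂ} (hτ : lindblad (shift ℂ m) τ = 0) :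
    τ 0 0 = τ.trace := by
  have h := trace_lindblad_mul (shift ℂ m) τ (numberOp ℂ m)
  rw [hτ, Matrix.zero_mul, trace_zero, lindbladAdjoint_shift_numberOp, mul_sub, mul_one,
    trace_sub, trace_mul_single] at h
  simpa [sub_eq_zero] using h.symm

lemma lindblad_shift_eq_zero_iff {τ : Matrix (Fin (m + 1)) (Fin (m + 1)) ℂ} (hτ : τ.PosSemidef)
    (htr : τ.trace = 1) : lindblad (shift ℂ m) τ = 0 ↔ τ = single 0 0 1 := by
  refine ⟨fun h => ?_, fun h => h ▸ lindblad_shift_single_zero⟩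
  rw [hτ.eq_single_of_apply_eq_trace (apply_zero_zero_eq_trace_of_lindblad_shift_eq_zero h), htr]

lemma indecomposable_shift : Indecomposable (shift ℂ m) := by
  intro Q hQ hQQ hQS
  have hQS' : Q * (shift ℂ m)ᴴ = (shift ℂ m)ᴴ * Q := by
    simpa [conjTranspose_mul, ← hQ] using (congrArg conjTranspose hQS).symm
  have hQE : Q * single 0 0 1 = single 0 0 1 * Q := by
    rw [← sub_sub_cancel 1 (single 0 0 1), ← conjTranspose_shift_mul_shift, mul_sub, sub_mul,
      mul_one, one_mul, ← Matrix.mul_assoc, hQS', Matrix.mul_assoc, hQS, Matrix.mul_assoc]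
  have hQc := eq_smul_one_of_commute_conjTranspose_shift hQS' hQE
  have hc : IsIdempotentElem (Q 0 0) := by
    have h := congrFun (congrFun hQQ 0) 0
    rw [hQc] at h
    simpa [IsIdempotentElem] using h
  rcases IsIdempotentElem.iff_eq_zero_or_one.1 hc with h | h
  · exact Or.inl (by rw [hQc, h, zero_smul])
  · exact Or.inr (by rw [hQc, h, one_smul])

end ShiftGenerator

/-- Construction of a simple evolution leading to a given pure state. -/
theorem stmt16 {n : ℕ} (φ : Fin n → ℂ) (hφ : star φ ⬝ᵥ φ = 1) :
    ∃ h : Matrix (Fin n) (Fin n) ℂ, Indecomposable h ∧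
      ∀ σ : Matrix (Fin n) (Fin n) ℂ, σ.PosSemidef → σ.trace = 1 →
        (lindblad h σ = 0 ↔ σ = vecMulVec φ (star φ)) := by
  obtain _ | m := n
  · simp at hφ
  obtain ⟨U, hU⟩ := exists_unitary_col_eq 0 φ hφ
  let e := Unitary.conjStarAlgAut ℂ _ U
  have he : e (single 0 0 1) = vecMulVec φ (star φ) := by
    rw [Unitary.conjStarAlgAut_apply, star_eq_conjTranspose, mul_single_mul_conjTranspose, hU]
  refine ⟨e (shift ℂ m), indecomposable_shift.map e, fun σ hσ htr => ?_⟩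
  obtain ⟨τ, rfl⟩ : ∃ τ, e τ = σ := ⟨e.symm σ, e.apply_symm_apply σ⟩
  rw [lindblad_map, map_eq_zero_iff e (EquivLike.injective e), ← he, EmbeddingLike.apply_eq_iff_eq]
  exact lindblad_shift_eq_zero_iff hσ.of_conjStarAlgAut (by rwa [trace_conjStarAlgAut] at htr)
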